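/- arXiv:math/0201106 — 4 statements merged into one kernel-verified Lean document; each statement's English description precedes it below -/
import Mathlib

section
/- Let Y be a finite connected graph with Euler characteristic 1 - k, where k ≥ 2, such that every vertex of Y has degree at least three. Then every simple path in Y contains at most 2k - 3 edges. -/
/-! By the handshake lemma, minimum degree three gives `3 V ≤ 2 E`; together with
`E = V + k - 1` this forces `V ≤ 2k - 2`. A simple path with `m` edges visits `m + 1`
distinct vertices, so `m ≤ 2k - 3`. -/

/-- Connectivity of a multigraph (given by an endpoints map `ends`) using only
edges from the set `S`. -/
def ConnVia {V E : Type} (ends : E → Sym2 V) (S : Set E) : Prop :=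
  ∀ u v : V, Relation.ReflTransGen (fun a b => ∃ e ∈ S, ends e = s(a, b)) u v

/-- Degree of a vertex in a multigraph: number of incident edge-ends
(a loop counts twice). -/
def mdegree {V E : Type} [Fintype E] [DecidableEq V] (ends : E → Sym2 V) (v : V) : ℕ :=
  ∑ e : E, (if ends e = s(v, v) then 2 else if v ∈ ends e then 1 else 0)

section Handshake

variable {V E : Type} [DecidableEq V]

lemma incidence_mk_eq (a b v : V) :
    (if s(a, b) = s(v, v) then 2 else if v ∈ s(a, b) then 1 else 0) =
      (if a = v then 1 else 0) + (if b = v then 1 else 0) := by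
  by_cases ha : a = v <;> by_cases hb : b = v <;> simp_all [eq_comm]

lemma sum_incidence_eq_two [Fintype V] (p : Sym2 V) :
    ∑ v : V, (if p = s(v, v) then 2 else if v ∈ p then 1 else 0) = 2 := by
  induction p using Sym2.ind with
  | _ a b => simp only [incidence_mk_eq, Finset.sum_add_distrib, Finset.sum_ite_eq,
      Finset.mem_univ, if_true]

lemma sum_mdegree_eq_two_mul_card [Fintype V] [Fintype E] (ends : E → Sym2 V) :
    ∑ v : V, mdegree ends v = 2 * Fintype.card E := by
  simp only [mdegree]
  rw [Finset.sum_comm]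
  simp [sum_incidence_eq_two, mul_comm]

lemma three_mul_card_le_of_three_le_mdegree [Fintype V] [Fintype E] (ends : E → Sym2 V)
    (hdeg : ∀ v : V, 3 ≤ mdegree ends v) :
    3 * Fintype.card V ≤ 2 * Fintype.card E :=
  calc 3 * Fintype.card V = ∑ _v : V, 3 := by simp [mul_comm]
    _ ≤ ∑ v : V, mdegree ends v := Finset.sum_le_sum fun v _ => hdeg v
    _ = 2 * Fintype.card E := sum_mdegree_eq_two_mul_card ends

lemma card_add_two_le_two_mul_of_euler_char [Fintype V] [Fintype E] (ends : E → Sym2 V)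
    (hdeg : ∀ v : V, 3 ≤ mdegree ends v) (k : ℕ)
    (heuler : (Fintype.card V : ℤ) - Fintype.card E = 1 - k) :
    Fintype.card V + 2 ≤ 2 * k := by
  have := three_mul_card_le_of_three_le_mdegree ends hdeg
  omega

end Handshake

theorem stmt1_general {V E : Type} [Fintype V] [Fintype E] [DecidableEq V]
    (ends : E → Sym2 V) (k : ℕ)
    (heuler : (Fintype.card V : ℤ) - Fintype.card E = 1 - k)
    (hdeg : ∀ v : V, 3 ≤ mdegree ends v)
    -- a simple path with `m` edges: `m + 1` pairwise distinct vertices joined by edges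
    (m : ℕ) (vs : Fin (m + 1) → V)
    (hvs : Function.Injective vs) :
    m ≤ 2 * k - 3 := by
  have hpath : m + 1 ≤ Fintype.card V := by
    simpa using Fintype.card_le_of_injective vs hvs
  have hV := card_add_two_le_two_mul_of_euler_char ends hdeg k heuler
  omega

theorem stmt1 {V E : Type} [Fintype V] [Fintype E] [DecidableEq V]
    (ends : E → Sym2 V) (k : ℕ) (hk : 2 ≤ k)
    (hconn : ConnVia ends Set.univ)
    (heuler : (Fintype.card V : ℤ) - Fintype.card E = 1 - k)
    (hdeg : ∀ v : V, 3 ≤ mdegree ends v)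
    -- a simple path with `m` edges: `m + 1` pairwise distinct vertices joined by edges
    (m : ℕ) (vs : Fin (m + 1) → V) (es : Fin m → E)
    (hvs : Function.Injective vs)
    (hpath : ∀ i : Fin m, ends (es i) = s(vs i.castSucc, vs i.succ)) :
    m ≤ 2 * k - 3 :=
  stmt1_general ends k heuler hdeg m vs hvs
end

section
/- Let G be a group, H a subgroup of G that is separable in G, and H₁ a subgroup with H ≤ H₁ ≤ G and [H₁ : H] < ∞. Then H₁ is separable in G. -/
/-!
Separate `g ∉ H` from `H` by a finite-index normal subgroup `N`, meaning `h⁻¹ * g ∉ N` for all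
`h ∈ H`. Since `H₁` is a union of finitely many cosets `x H`, and `g ∉ H₁` gives `x⁻¹ * g ∉ H`
for every coset representative `x`, intersecting the subgroups separating each `x⁻¹ * g` from `H`
yields one finite-index normal subgroup separating `g` from `H₁`.
-/

/-- A subgroup `H ≤ G` is separable if every `g ∉ H` can be separated from `H`
by a homomorphism onto a finite group. -/
def SubgroupSeparable {G : Type} [Group G] (H : Subgroup G) : Prop :=
  ∀ g : G, g ∉ H →
    ∃ (K : Type) (_ : Group K) (ψ : G →* K),
      Finite K ∧ Function.Surjective ψ ∧ ψ g ∉ H.map ψ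

section

variable {G : Type} [Group G]

theorem subgroupSeparable_iff_exists_normal_finiteIndex (H : Subgroup G) :
    SubgroupSeparable H ↔
      ∀ g ∉ H, ∃ N : Subgroup G, N.Normal ∧ N.FiniteIndex ∧ ∀ h ∈ H, h⁻¹ * g ∉ N := by
  constructor
  · intro hsep g hg
    obtain ⟨K, _, ψ, _, -, hψg⟩ := hsep g hg
    refine ⟨ψ.ker, ψ.normal_ker, inferInstance, fun h hh hker => hψg ⟨h, hh, ?_⟩⟩
    rwa [MonoidHom.mem_ker, map_mul, map_inv, inv_mul_eq_one] at hker
  · intro hsep g hg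
    obtain ⟨N, _, _, hN⟩ := hsep g hg
    refine ⟨G ⧸ N, inferInstance, QuotientGroup.mk' N, inferInstance,
      QuotientGroup.mk'_surjective N, ?_⟩
    rintro ⟨h, hh, hhg⟩
    exact hN h hh (QuotientGroup.eq.mp hhg)

open Subgroup in
theorem SubgroupSeparable.of_le_of_relIndex_ne_zero {H H₁ : Subgroup G}
    (hsep : SubgroupSeparable H) (hle : H ≤ H₁) (hfin : H.relIndex H₁ ≠ 0) :
    SubgroupSeparable H₁ := by
  rw [subgroupSeparable_iff_exists_normal_finiteIndex] at hsep ⊢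
  intro g hg
  have : (H.subgroupOf H₁).FiniteIndex := ⟨hfin⟩
  let x : H₁ ⧸ H.subgroupOf H₁ → H₁ := Quotient.out
  have hx : ∀ q, (x q : G)⁻¹ * g ∉ H := fun q hq =>
    hg (by simpa using H₁.mul_mem (x q).2 (hle hq))
  choose N hN hNfin hNsep using fun q => hsep _ (hx q)
  refine ⟨⨅ q, N q, normal_iInf_normal hN, finiteIndex_iInf hNfin, fun h₁ hh₁ hmem => ?_⟩
  set q : H₁ ⧸ H.subgroupOf H₁ := QuotientGroup.mk ⟨h₁, hh₁⟩
  have hrep : (x q : G)⁻¹ * h₁ ∈ H := by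
    simpa [mem_subgroupOf] using QuotientGroup.eq.mp (QuotientGroup.out_eq' q)
  refine hNsep q _ hrep ?_
  simpa [mul_assoc] using mem_iInf.mp hmem q

end

theorem stmt3 {G : Type} [Group G] (H H₁ : Subgroup G)
    (hsep : SubgroupSeparable H) (hle : H ≤ H₁)
    (hfin : H.relIndex H₁ ≠ 0) :
    SubgroupSeparable H₁ :=
  SubgroupSeparable.of_le_of_relIndex_ne_zero hsep hle hfin
end

section
/- Let F be the free group on letters a₁,…,aₙ and let r be a nontrivial cyclically reduced word which is not a proper power. Then r⁻¹ is not a subword of r^d for any d > 0. -/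
/-! An infix of `r^d` of length `|r|` is a rotation `v u` of `r = u v`. If it equals
`r⁻¹ = v⁻¹ u⁻¹`, comparing lengths gives `u = u⁻¹` and `v = v⁻¹`. A reduced word equal to its
own inverse is empty: stripping its first and last letters leaves a shorter such word, and what
remains at the end would be a letter equal to its inverse or a cancelling pair. -/

/-- A word over the alphabet `{a₁,…,aₙ}^{±1}` is (freely) reduced if it contains
no cancelling adjacent pair `a a⁻¹`. -/
def WordReduced {n : ℕ} (w : List (Fin n × Bool)) : Prop :=
  List.Chain' (fun x y => ¬(x.1 = y.1 ∧ y.2 = !x.2)) w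

/-- The formal inverse of a word. -/
def wordInv {n : ℕ} (w : List (Fin n × Bool)) : List (Fin n × Bool) :=
  (w.map fun x => (x.1, !x.2)).reverse

namespace List

variable {α : Type*}

theorem getElem?_flatten_replicate (l : List α) {d i : ℕ} (hi : i < d * l.length) :
    (replicate d l).flatten[i]? = l[i % l.length]? := by
  induction d generalizing i with
  | zero => simp at hi
  | succ d ih =>
    rw [replicate_succ, flatten_cons, getElem?_append]
    split_ifs with hil
    · rw [Nat.mod_eq_of_lt hil]
    · rw [ih (by rw [Nat.succ_mul] at hi; omega), ← Nat.mod_eq_sub_mod (not_lt.mp hil)]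

theorem exists_eq_rotate_of_infix_flatten_replicate {w l : List α} {d : ℕ}
    (hw : w <:+: (replicate d l).flatten) (hlen : w.length = l.length) :
    ∃ k, w = l.rotate k := by
  obtain ⟨s, t, hst⟩ := hw
  have hbound : s.length + w.length ≤ d * l.length := by
    have := congrArg length hst
    simp only [length_append, length_flatten, map_replicate, sum_replicate, smul_eq_mul] at this
    omega
  refine ⟨s.length, ext_getElem? fun j => ?_⟩
  rcases lt_or_ge j l.length with hj | hj
  · rw [getElem?_rotate hj, Nat.add_comm, ← getElem?_flatten_replicate l (d := d) (by omega),
      ← hst, append_assoc, getElem?_append_right (by omega), Nat.add_sub_cancel_left,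
      getElem?_append_left (by omega)]
  · simp [hj, hlen]

end List

theorem length_wordInv {n : ℕ} (w : List (Fin n × Bool)) : (wordInv w).length = w.length := by
  simp [wordInv]

theorem wordInv_append {n : ℕ} (u v : List (Fin n × Bool)) :
    wordInv (u ++ v) = wordInv v ++ wordInv u := by
  simp [wordInv]

theorem WordReduced.eq_nil_of_wordInv_eq {n : ℕ} {w : List (Fin n × Bool)} (hw : WordReduced w)
    (h : wordInv w = w) : w = [] := by
  induction hlen : w.length using Nat.strong_induction_on generalizing w with
  | _ m ih =>
  rcases w with _ | ⟨a, t⟩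
  · rfl
  rcases t.eq_nil_or_concat with rfl | ⟨m, b, rfl⟩
  · simp [wordInv, Prod.ext_iff] at h
  obtain ⟨-, hm, rfl⟩ : _ ∧ wordInv m = m ∧ _ := by simpa [wordInv] using h
  have hmred : WordReduced m := hw.infix ⟨[a], [(a.1, !a.2)], by simp⟩
  obtain rfl := ih _ (by simp [← hlen]) hmred hm rfl
  exact absurd (List.isChain_pair.mp hw) (by simp)

theorem WordReduced.wordInv_ne_rotate {n : ℕ} {r : List (Fin n × Bool)} (hr : WordReduced r)
    (hne : r ≠ []) (k : ℕ) : wordInv r ≠ r.rotate k := by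
  intro h
  set j := k % r.length
  have hsplit : wordInv (r.drop j) ++ wordInv (r.take j) = r.drop j ++ r.take j := by
    rw [← wordInv_append, List.take_append_drop, h, List.rotate_eq_drop_append_take_mod]
  obtain ⟨hdrop, htake⟩ := List.append_inj hsplit (length_wordInv _)
  have hdrop_nil :=
    WordReduced.eq_nil_of_wordInv_eq (hr.infix (List.drop_suffix j r).isInfix) hdrop
  have htake_nil :=
    WordReduced.eq_nil_of_wordInv_eq (hr.infix (List.take_prefix j r).isInfix) htake
  exact hne (by rw [← List.take_append_drop j r, hdrop_nil, htake_nil, List.append_nil])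

theorem stmt6_general {n : ℕ} (r : List (Fin n × Bool)) (hne : r ≠ [])
    (hcyc : WordReduced (r ++ r))
    (d : ℕ) :
    ¬ (wordInv r <:+: (List.replicate d r).flatten) := by
  intro hinfix
  obtain ⟨k, hk⟩ := List.exists_eq_rotate_of_infix_flatten_replicate hinfix (length_wordInv r)
  exact WordReduced.wordInv_ne_rotate (hcyc.infix (List.prefix_append r r).isInfix) hne k hk

theorem stmt6 {n : ℕ} (r : List (Fin n × Bool)) (hne : r ≠ [])
    (hcyc : WordReduced (r ++ r))
    (hpp : ∀ (s : List (Fin n × Bool)) (e : ℕ), 2 ≤ e → r ≠ (List.replicate e s).flatten)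
    (d : ℕ) (hd : 0 < d) :
    ¬ (wordInv r <:+: (List.replicate d r).flatten) :=
  stmt6_general r hne hcyc d
end

section
/- Let r be a nontrivial cyclically reduced word in a free group F that is not a proper power, and let u be a reduced word with |u| ≥ |r|. Suppose r^d = x u y = x' u y' (graphical equalities) for some d > 0 where x' = x v with v nonempty. Then v = r_*^z for some 0 ≤ z ≤ d, where r_* is a cyclic permutation of r. -/
namespace List

variable {α : Type*}

theorem length_flatten_replicate (d : ℕ) (r : List α) :
    (replicate d r).flatten.length = d * r.length := by
  simp [length_flatten, sum_replicate]

theorem getElem?_flatten_replicate_s7 {r : List α} {d j : ℕ} (hj : j < d * r.length) :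
    (replicate d r).flatten[j]? = r[j % r.length]? := by
  induction d generalizing j with
  | zero => omega
  | succ d ih =>
    rw [replicate_succ, flatten_cons]
    by_cases hjr : j < r.length
    · rw [getElem?_append_left hjr, Nat.mod_eq_of_lt hjr]
    · rw [getElem?_append_right (by omega), Nat.mod_eq_sub_mod (by omega)]
      exact ih (by rw [Nat.succ_mul] at hj; omega)

theorem getElem?_flatten_replicate_rotate {r : List α} {z p i : ℕ} (hi : i < z * r.length) :
    (replicate z (r.rotate p)).flatten[i]? = r[(p + i) % r.length]? := by
  have hr : 0 < r.length := Nat.pos_of_mul_pos_left (Nat.zero_lt_of_lt hi)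
  rw [getElem?_flatten_replicate_s7 (by rwa [length_rotate]), length_rotate,
    getElem?_rotate (Nat.mod_lt _ hr), Nat.mod_add_mod, Nat.add_comm]

theorem getElem?_of_flatten_replicate_eq_append {r x w y : List α} {d i : ℕ}
    (h : (replicate d r).flatten = x ++ w ++ y) (hi : i < w.length) :
    w[i]? = r[(x.length + i) % r.length]? := by
  have hlen := congrArg length h
  simp only [length_flatten_replicate, length_append] at hlen
  rw [← getElem?_flatten_replicate_s7 (d := d) (by omega), h, append_assoc,
    getElem?_append_right (by omega), Nat.add_sub_cancel_left, getElem?_append_left hi]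

theorem eq_flatten_replicate_rotate_of_flatten_replicate_eq_append {r x w y : List α} {d z : ℕ}
    (h : (replicate d r).flatten = x ++ w ++ y) (hw : w.length = z * r.length) :
    w = (replicate z (r.rotate x.length)).flatten := by
  apply ext_getElem?
  intro i
  by_cases hi : i < w.length
  · rw [getElem?_of_flatten_replicate_eq_append h hi,
      getElem?_flatten_replicate_rotate (hw ▸ hi)]
  · rw [getElem?_eq_none (by omega : w.length ≤ i),
      getElem?_eq_none (by rw [length_flatten_replicate, length_rotate]; omega)]

theorem take_eq_rotate_of_flatten_replicate_eq_append {r x u y : List α} {d : ℕ}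
    (h : (replicate d r).flatten = x ++ u ++ y) (hu : r.length ≤ u.length) :
    u.take r.length = r.rotate x.length := by
  have h' : (replicate d r).flatten = x ++ u.take r.length ++ (u.drop r.length ++ y) := by
    rw [h, append_assoc x (take _ u), ← append_assoc (take _ u), take_append_drop, append_assoc]
  simpa using eq_flatten_replicate_rotate_of_flatten_replicate_eq_append (z := 1) h'
    (by simp [hu])

theorem eq_flatten_replicate_of_append_comm {a b : List α} {k : ℕ} (hab : b ++ a = a ++ b)
    (hb : b.length = k * a.length) : b = (replicate k a).flatten := by
  induction k generalizing b with
  | zero => simpa using hb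
  | succ k ih =>
    obtain ⟨c, rfl⟩ : a <+: b :=
      prefix_of_prefix_length_le (hab ▸ prefix_append a b) (prefix_append b a)
        (by rw [hb, Nat.succ_mul]; omega)
    have hca : c ++ a = a ++ c := by simpa using hab
    rw [ih hca (by simp only [length_append, Nat.succ_mul] at hb; omega), replicate_succ,
      flatten_cons]

theorem iterate_rotate_one (l : List α) (n : ℕ) :
    (fun l : List α => l.rotate 1)^[n] l = l.rotate n := by
  induction n with
  | zero => simp
  | succ n ih => rw [Function.iterate_succ_apply', ih, rotate_rotate]

theorem rotate_gcd_eq_self {l : List α} {t : ℕ} (h : l.rotate t = l) :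
    l.rotate (t.gcd l.length) = l := by
  have periodic : ∀ n, l.rotate n = l →
      Function.IsPeriodicPt (fun l : List α => l.rotate 1) n l :=
    fun n hn => (iterate_rotate_one l n).trans hn
  rw [← iterate_rotate_one]
  exact (periodic t h).gcd (periodic _ (rotate_length l))

theorem exists_eq_flatten_replicate_of_rotate_eq_self {l : List α} {t : ℕ} (h : l.rotate t = l)
    (ht : ¬l.length ∣ t) : ∃ (s : List α) (e : ℕ), 2 ≤ e ∧ l = (replicate e s).flatten := by
  by_cases hl : l = []
  · exact ⟨[], 2, le_rfl, by simp [hl]⟩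
  set g := t.gcd l.length
  have hg : g ∣ l.length := Nat.gcd_dvd_right t l.length
  have hglt : g < l.length := (Nat.le_of_dvd (length_pos_iff.mpr hl) hg).lt_of_ne
    fun hgm => ht (hgm ▸ Nat.gcd_dvd_left t l.length)
  obtain ⟨k, hk⟩ : g ∣ l.length - g := Nat.dvd_sub hg dvd_rfl
  have hcomm : l.drop g ++ l.take g = l.take g ++ l.drop g := by
    rw [← rotate_eq_drop_append_take hglt.le, rotate_gcd_eq_self h, take_append_drop]
  have hdrop : l.drop g = (replicate k (l.take g)).flatten :=
    eq_flatten_replicate_of_append_comm hcomm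
      (by rw [length_drop, hk, length_take, Nat.min_eq_left hglt.le, Nat.mul_comm])
  refine ⟨l.take g, k + 1, Nat.succ_le_succ (Nat.one_le_iff_ne_zero.mpr ?_), ?_⟩
  · rintro rfl
    omega
  · rw [replicate_succ, flatten_cons, ← hdrop, take_append_drop]

end List

theorem stmt7_general {n : ℕ} (r u x y x' y' v : List (Fin n × Bool)) (d : ℕ)
    (hrne : r ≠ [])
    (hpp : ∀ (s : List (Fin n × Bool)) (e : ℕ), 2 ≤ e → r ≠ (List.replicate e s).flatten)
    (hlen : r.length ≤ u.length)
    (h1 : (List.replicate d r).flatten = x ++ u ++ y)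
    (h2 : (List.replicate d r).flatten = x' ++ u ++ y')
    (hx' : x' = x ++ v) :
    ∃ (z i : ℕ), z ≤ d ∧ v = (List.replicate z (r.rotate i)).flatten := by
  subst hx'
  have hv : (List.replicate d r).flatten = x ++ v ++ (u ++ y') := by simpa using h2
  have hshift : (r.rotate v.length).rotate x.length = r.rotate x.length := by
    rw [List.rotate_rotate, Nat.add_comm, ← List.length_append,
      ← List.take_eq_rotate_of_flatten_replicate_eq_append h2 hlen,
      List.take_eq_rotate_of_flatten_replicate_eq_append h1 hlen]
  have hdvd : r.length ∣ v.length := by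
    by_contra hndvd
    obtain ⟨s, e, he, hr⟩ := List.exists_eq_flatten_replicate_of_rotate_eq_self
      (List.rotate_eq_rotate.mp hshift) hndvd
    exact hpp s e he hr
  obtain ⟨z, hz⟩ := hdvd
  refine ⟨z, x.length, ?_, List.eq_flatten_replicate_rotate_of_flatten_replicate_eq_append hv
    (by rw [hz, Nat.mul_comm])⟩
  have hvlen := congrArg List.length hv
  simp only [List.length_flatten_replicate, List.length_append, hz] at hvlen
  exact Nat.le_of_mul_le_mul_left (by rw [Nat.mul_comm _ d]; omega)
    (List.length_pos_iff.mpr hrne)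

theorem stmt7 {n : ℕ} (r u x y x' y' v : List (Fin n × Bool)) (d : ℕ) (hd : 0 < d)
    (hrne : r ≠ []) (hcyc : WordReduced (r ++ r))
    (hpp : ∀ (s : List (Fin n × Bool)) (e : ℕ), 2 ≤ e → r ≠ (List.replicate e s).flatten)
    (hu : WordReduced u) (hlen : r.length ≤ u.length)
    (h1 : (List.replicate d r).flatten = x ++ u ++ y)
    (h2 : (List.replicate d r).flatten = x' ++ u ++ y')
    (hx' : x' = x ++ v) (hv : v ≠ []) :
    ∃ (z i : ℕ), z ≤ d ∧ v = (List.replicate z (r.rotate i)).flatten :=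
  stmt7_general r u x y x' y' v d hrne hpp hlen h1 h2 hx'
end
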